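/- arXiv:2105.09522 — 6 statements merged into one kernel-verified Lean document; each statement's English description precedes it below -/
import Mathlib

section
/- Let H = (V, E) be a hypergraph with quota function f: E → ℤ⁺, and suppose that for every vertex v ∈ V the set of hyperedges containing v can be partitioned into at most Δ laminar subfamilies. Let S ⊆ V and B ⊆ V \ S be such that S ∪ B is a maximal feasible set. Then for every feasible set C with S ⊆ C and C ∩ B = ∅, we have |C| ≤ |S| + Δ·|B|. -/
/-- A set `S` is feasible in the hypergraph with edge set `E` and quotas `f`
if it meets every hyperedge `e ∈ E` in at most `f e` vertices. -/
def HyperFeasible {α : Type*} [DecidableEq α]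
    (E : Finset (Finset α)) (f : Finset α → ℕ) (S : Finset α) : Prop :=
  ∀ e ∈ E, (S ∩ e).card ≤ f e

lemma lemA {α : Type*} [DecidableEq α] (Δ : ℕ) (E : Finset (Finset α)) :
    ∀ (B W : Finset α) (ed : α → Finset α),
      (∀ v ∈ W, ed v ∈ E) →
      (∀ v ∈ W, v ∈ ed v) →
      (∀ v ∈ W, (W ∩ ed v).card ≤ (B ∩ ed v).card) →
      (∀ b ∈ B, ∃ idx : Finset α → ℕ,
        (∀ e ∈ E, b ∈ e → idx e < Δ) ∧
        (∀ X ∈ E, ∀ Y ∈ E, b ∈ X → b ∈ Y → idx X = idx Y →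
          (X ⊆ Y ∨ Y ⊆ X ∨ X ∩ Y = ∅))) →
      W.card ≤ Δ * B.card := by
  intro B
  induction B using Finset.strongInduction with
  | _ B ih =>
    intro W ed hEW hvW hcard hidx
    rcases W.eq_empty_or_nonempty with rfl | ⟨v0, hv0⟩
    · simp
    have h1 : v0 ∈ W ∩ ed v0 := Finset.mem_inter.2 ⟨hv0, hvW v0 hv0⟩
    have h2 : 0 < (B ∩ ed v0).card :=
      lt_of_lt_of_le (Finset.card_pos.2 ⟨v0, h1⟩) (hcard v0 hv0)
    obtain ⟨b, hb⟩ := Finset.card_pos.1 h2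
    obtain ⟨hbB, _hbe⟩ := Finset.mem_inter.1 hb
    obtain ⟨idx, hidx1, hidx2⟩ := hidx b hbB
    classical
    set X := W.filter (fun v => b ∈ ed v) with hXdef
    have hXW : X ⊆ W := Finset.filter_subset _ _
    -- for each chain index i, pick a finset of ≤ 1 vertices hitting all edges of the chain
    have hpick : ∀ i : ℕ, ∃ y : Finset α, y ⊆ X ∧ y.card ≤ 1 ∧
        ∀ v ∈ X, idx (ed v) = i → ∃ z ∈ y, z ∈ ed v := by
      intro i
      by_cases hne : (X.filter (fun v => idx (ed v) = i)).Nonempty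
      · obtain ⟨m, hm, hmin⟩ := Finset.exists_min_image _ (fun v => (ed v).card) hne
        have hmX : m ∈ X := (Finset.mem_filter.1 hm).1
        have hmi : idx (ed m) = i := (Finset.mem_filter.1 hm).2
        have hmW : m ∈ W := hXW hmX
        have hbm : b ∈ ed m := (Finset.mem_filter.1 hmX).2
        refine ⟨{m}, by simpa using hmX, by simp, ?_⟩
        intro v hvX hi
        refine ⟨m, Finset.mem_singleton_self m, ?_⟩
        have hvW' : v ∈ W := hXW hvX
        have hbv : b ∈ ed v := (Finset.mem_filter.1 hvX).2
        have hcomp := hidx2 (ed m) (hEW m hmW) (ed v) (hEW v hvW') hbm hbv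
          (by rw [hmi, hi])
        rcases hcomp with hsub | hsub | hdis
        · exact hsub (hvW m hmW)
        · have hle : (ed m).card ≤ (ed v).card :=
            hmin v (Finset.mem_filter.2 ⟨hvX, hi⟩)
          have : ed v = ed m := Finset.eq_of_subset_of_card_le hsub hle
          rw [this]; exact hvW m hmW
        · exact absurd (Finset.mem_inter.2 ⟨hbm, hbv⟩) (by simp [hdis])
      · refine ⟨∅, by simp, by simp, ?_⟩
        intro v hvX hi
        exact absurd ⟨v, Finset.mem_filter.2 ⟨hvX, hi⟩⟩ hne
    choose pick hpick1 hpick2 hpick3 using hpick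
    set Y := (Finset.range Δ).biUnion pick with hYdef
    have hYX : Y ⊆ X := by
      intro z hz
      obtain ⟨i, _, hzi⟩ := Finset.mem_biUnion.1 hz
      exact hpick1 i hzi
    have hYcard : Y.card ≤ Δ := by
      calc Y.card ≤ ∑ i ∈ Finset.range Δ, (pick i).card := Finset.card_biUnion_le
        _ ≤ ∑ _i ∈ Finset.range Δ, 1 := Finset.sum_le_sum (fun i _ => hpick2 i)
        _ = Δ := by simp
    have hYhit : ∀ v ∈ X, ∃ y ∈ Y, y ∈ ed v := by
      intro v hvX
      have hvW' : v ∈ W := hXW hvX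
      have hlt : idx (ed v) < Δ := hidx1 (ed v) (hEW v hvW') (Finset.mem_filter.1 hvX).2
      obtain ⟨z, hz1, hz2⟩ := hpick3 (idx (ed v)) v hvX rfl
      exact ⟨z, Finset.mem_biUnion.2 ⟨idx (ed v), Finset.mem_range.2 hlt, hz1⟩, hz2⟩
    -- recurse with B.erase b and W \ Y
    have hrec : (W \ Y).card ≤ Δ * (B.erase b).card := by
      apply ih (B.erase b) (Finset.erase_ssubset hbB) (W \ Y) ed
      · intro v hv; exact hEW v (Finset.mem_sdiff.1 hv).1
      · intro v hv; exact hvW v (Finset.mem_sdiff.1 hv).1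
      · intro v hv
        obtain ⟨hvW', hvY⟩ := Finset.mem_sdiff.1 hv
        by_cases hbv : b ∈ ed v
        · have hvX : v ∈ X := Finset.mem_filter.2 ⟨hvW', hbv⟩
          obtain ⟨y, hyY, hyv⟩ := hYhit v hvX
          have hyW : y ∈ W := hXW (hYX hyY)
          have hsub : (W \ Y) ∩ ed v ⊆ (W ∩ ed v).erase y := by
            intro z hz
            obtain ⟨hz1, hz2⟩ := Finset.mem_inter.1 hz
            obtain ⟨hz3, hz4⟩ := Finset.mem_sdiff.1 hz1
            refine Finset.mem_erase.2 ⟨?_, Finset.mem_inter.2 ⟨hz3, hz2⟩⟩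
            rintro rfl; exact hz4 hyY
          have hbBe : b ∈ B ∩ ed v := Finset.mem_inter.2 ⟨hbB, hbv⟩
          have heq : (B.erase b) ∩ ed v = (B ∩ ed v).erase b := by
            ext z; simp only [Finset.mem_inter, Finset.mem_erase]; tauto
          calc ((W \ Y) ∩ ed v).card ≤ ((W ∩ ed v).erase y).card :=
                Finset.card_le_card hsub
            _ = (W ∩ ed v).card - 1 :=
                Finset.card_erase_of_mem (Finset.mem_inter.2 ⟨hyW, hyv⟩)
            _ ≤ (B ∩ ed v).card - 1 := Nat.sub_le_sub_right (hcard v hvW') 1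
            _ = ((B ∩ ed v).erase b).card := (Finset.card_erase_of_mem hbBe).symm
            _ = ((B.erase b) ∩ ed v).card := by rw [heq]
        · have heq : (B.erase b) ∩ ed v = B ∩ ed v := by
            ext z; simp only [Finset.mem_inter, Finset.mem_erase]
            constructor
            · rintro ⟨⟨_, h⟩, h2⟩; exact ⟨h, h2⟩
            · rintro ⟨h1, h2⟩; exact ⟨⟨by rintro rfl; exact hbv h2, h1⟩, h2⟩
          rw [heq]
          exact le_trans (Finset.card_le_card
            (Finset.inter_subset_inter (Finset.sdiff_subset) (le_refl _))) (hcard v hvW')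
      · intro b' hb'
        exact hidx b' (Finset.mem_of_mem_erase hb')
    have hBpos : 0 < B.card := Finset.card_pos.2 ⟨b, hbB⟩
    have hErase : (B.erase b).card = B.card - 1 := Finset.card_erase_of_mem hbB
    calc W.card ≤ (W \ Y).card + Y.card := Finset.card_le_card_sdiff_add_card
      _ ≤ Δ * (B.card - 1) + Δ := by
          rw [hErase] at hrec; exact Nat.add_le_add hrec hYcard
      _ = Δ * B.card := by
          conv_rhs => rw [← Nat.sub_add_cancel hBpos]
          rw [Nat.mul_add, Nat.mul_one]

/-- Lemma: if `S ∪ B` is a maximal feasible set (with `S` and `B` disjoint) in a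
hypergraph where the hyperedges through each vertex split into at most `Δ` laminar
families, then every feasible set `C` containing `S` and disjoint from `B`
satisfies `|C| ≤ |S| + Δ·|B|`. -/
theorem stmt_1 {α : Type*} [DecidableEq α]
    (V : Finset α) (E : Finset (Finset α)) (f : Finset α → ℕ)
    (hq : ∀ e ∈ E, 1 ≤ f e) (hE : ∀ e ∈ E, e ⊆ V)
    (Δ : ℕ)
    (hlam : ∀ v ∈ V, ∃ idx : Finset α → ℕ,
      (∀ e ∈ E, v ∈ e → idx e < Δ) ∧
      (∀ X ∈ E, ∀ Y ∈ E, v ∈ X → v ∈ Y → idx X = idx Y →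
        (X ⊆ Y ∨ Y ⊆ X ∨ X ∩ Y = ∅)))
    (S B : Finset α) (hS : S ⊆ V) (hB : B ⊆ V \ S)
    (hSBfeas : HyperFeasible E f (S ∪ B))
    (hSBmax : ∀ v ∈ V \ (S ∪ B), ¬ HyperFeasible E f (insert v (S ∪ B)))
    (C : Finset α) (hC : C ⊆ V) (hCfeas : HyperFeasible E f C)
    (hSC : S ⊆ C) (hCB : C ∩ B = ∅) :
    C.card ≤ S.card + Δ * B.card := by
  classical
  have hSBdisj : Disjoint S B := by
    rw [Finset.disjoint_left]
    intro a haS haB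
    exact (Finset.mem_sdiff.1 (hB haB)).2 haS
  -- every vertex of C \ S has a tight edge witnessing the charging inequality
  have key : ∀ v : α, ∃ e : Finset α, v ∈ C \ S →
      e ∈ E ∧ v ∈ e ∧ ((C \ S) ∩ e).card ≤ (B ∩ e).card := by
    intro v
    by_cases hv : v ∈ C \ S
    · obtain ⟨hvC, hvS⟩ := Finset.mem_sdiff.1 hv
      have hvV : v ∈ V := hC hvC
      have hvB : v ∉ B := by
        intro hvB
        have : v ∈ C ∩ B := Finset.mem_inter.2 ⟨hvC, hvB⟩
        rw [hCB] at this
        exact absurd this (Finset.notMem_empty v)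
      have hvSB : v ∈ V \ (S ∪ B) := by
        refine Finset.mem_sdiff.2 ⟨hvV, ?_⟩
        simp only [Finset.mem_union]
        tauto
      have hinf := hSBmax v hvSB
      rw [HyperFeasible] at hinf
      push_neg at hinf
      obtain ⟨e, heE, hgt⟩ := hinf
      have hve : v ∈ e := by
        by_contra hve
        rw [Finset.insert_inter_of_notMem hve] at hgt
        exact absurd (hSBfeas e heE) (not_le.2 hgt)
      refine ⟨e, fun _ => ⟨heE, hve, ?_⟩⟩
      -- f e ≤ |(S ∪ B) ∩ e|
      have h3 : f e ≤ ((S ∪ B) ∩ e).card := by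
        rw [Finset.insert_inter_of_mem hve] at hgt
        have := Finset.card_insert_le v ((S ∪ B) ∩ e)
        omega
      have h4 : ((S ∪ B) ∩ e).card = (S ∩ e).card + (B ∩ e).card := by
        rw [Finset.union_inter_distrib_right]
        exact Finset.card_union_of_disjoint
          (Finset.disjoint_of_subset_left (Finset.inter_subset_left)
            (Finset.disjoint_of_subset_right (Finset.inter_subset_left) hSBdisj))
      have h5 : (C ∩ e).card = (S ∩ e).card + ((C \ S) ∩ e).card := by
        have hCe : C ∩ e = (S ∩ e) ∪ ((C \ S) ∩ e) := by
          ext z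
          simp only [Finset.mem_inter, Finset.mem_union, Finset.mem_sdiff]
          constructor
          · rintro ⟨hzC, hze⟩
            by_cases hzS : z ∈ S
            · exact Or.inl ⟨hzS, hze⟩
            · exact Or.inr ⟨⟨hzC, hzS⟩, hze⟩
          · rintro (⟨h1, h2⟩ | ⟨⟨h1, _⟩, h2⟩)
            · exact ⟨hSC h1, h2⟩
            · exact ⟨h1, h2⟩
        rw [hCe]
        refine Finset.card_union_of_disjoint ?_
        rw [Finset.disjoint_left]
        intro a ha ha'
        exact (Finset.mem_sdiff.1 (Finset.mem_inter.1 ha').1).2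
          (Finset.mem_inter.1 ha).1
      have h6 : (C ∩ e).card ≤ f e := hCfeas e heE
      omega
    · exact ⟨∅, fun h => absurd h hv⟩
  choose ed hed using key
  have hmain : (C \ S).card ≤ Δ * B.card := by
    apply lemA Δ E B (C \ S) ed
    · intro v hv; exact (hed v hv).1
    · intro v hv; exact (hed v hv).2.1
    · intro v hv; exact (hed v hv).2.2
    · intro b hbB
      exact hlam b (Finset.mem_sdiff.1 (hB hbB)).1
  have hcardC : (C \ S).card + S.card = C.card :=
    Finset.card_sdiff_add_card_eq_card hSC
  omega
end

section
/- Let H = (V, E) be a hypergraph with quota function f: E → ℤ⁺, let Δ ≥ 1, and suppose that for every vertex v ∈ V the set of hyperedges containing v can be partitioned into at most Δ laminar subfamilies. Then for every maximal feasible set S ⊆ V and every feasible set C ⊆ V, we have |C| ≤ Δ·|S|. In particular, any maximal feasible set has size at least 1/Δ times the maximum size of a feasible set (the generalized maximum independent set). -/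
/-- If the hyperedges through each vertex split into at most `Δ` laminar families
(`Δ ≥ 1`), then every maximal feasible set `S` and every feasible set `C` satisfy
`|C| ≤ Δ·|S|`; in particular the maximum size of a feasible set (the generalized
maximum independent set) is at most `Δ·|S|`. -/
theorem stmt_2 {α : Type*} [DecidableEq α]
    (V : Finset α) (E : Finset (Finset α)) (f : Finset α → ℕ)
    (hq : ∀ e ∈ E, 1 ≤ f e) (hE : ∀ e ∈ E, e ⊆ V)
    (Δ : ℕ) (hΔ : 1 ≤ Δ)
    (hlam : ∀ v ∈ V, ∃ idx : Finset α → ℕ,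
      (∀ e ∈ E, v ∈ e → idx e < Δ) ∧
      (∀ X ∈ E, ∀ Y ∈ E, v ∈ X → v ∈ Y → idx X = idx Y →
        (X ⊆ Y ∨ Y ⊆ X ∨ X ∩ Y = ∅)))
    (S : Finset α) (hS : S ⊆ V) (hSfeas : HyperFeasible E f S)
    (hSmax : ∀ v ∈ V \ S, ¬ HyperFeasible E f (insert v S)) :
    (∀ C ⊆ V, HyperFeasible E f C → C.card ≤ Δ * S.card) ∧
    sSup {n : ℕ | ∃ C ⊆ V, HyperFeasible E f C ∧ C.card = n} ≤ Δ * S.card := by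
  classical
  -- For every vertex outside S there is a tight hyperedge through it.
  have hedge0 : ∀ v : α, ∃ e : Finset α, v ∈ V → v ∉ S →
      e ∈ E ∧ v ∈ e ∧ (S ∩ e).card = f e := by
    intro v
    by_cases hv : v ∈ V ∧ v ∉ S
    · obtain ⟨hvV, hvS⟩ := hv
      have h1 := hSmax v (Finset.mem_sdiff.mpr ⟨hvV, hvS⟩)
      rw [HyperFeasible] at h1
      push_neg at h1
      obtain ⟨e, heE, hlt⟩ := h1
      have hve : v ∈ e := by
        by_contra hve
        rw [Finset.insert_inter_of_notMem hve] at hlt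
        exact absurd (hSfeas e heE) (not_le.mpr hlt)
      refine ⟨e, fun _ _ => ⟨heE, hve, ?_⟩⟩
      rw [Finset.insert_inter_of_mem hve] at hlt
      have h2 : (insert v (S ∩ e)).card ≤ (S ∩ e).card + 1 :=
        Finset.card_insert_le _ _
      have h3 := hSfeas e heE
      omega
    · exact ⟨∅, fun h1 h2 => absurd ⟨h1, h2⟩ hv⟩
  choose edge hedge using hedge0
  -- Laminar index function at every vertex.
  have hidx0 : ∀ s : α, ∃ idx : Finset α → ℕ, s ∈ V →
      ((∀ e ∈ E, s ∈ e → idx e < Δ) ∧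
      (∀ X ∈ E, ∀ Y ∈ E, s ∈ X → s ∈ Y → idx X = idx Y →
        (X ⊆ Y ∨ Y ⊆ X ∨ X ∩ Y = ∅))) := by
    intro s
    by_cases hs : s ∈ V
    · obtain ⟨idx, h1, h2⟩ := hlam s hs
      exact ⟨idx, fun _ => ⟨h1, h2⟩⟩
    · exact ⟨fun _ => 0, fun h => absurd h hs⟩
  choose idxf hidxf using hidx0
  -- Key: injection from any feasible C into S × [Δ].
  have key : ∀ n : ℕ, ∀ C : Finset α, C.card ≤ n → C ⊆ V → HyperFeasible E f C →
      ∃ g : α → α × ℕ, Set.InjOn g ↑C ∧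
        (∀ c ∈ C, (g c).1 ∈ S ∧ (g c).2 < Δ ∧
          (c ∈ S → g c = (c, 0)) ∧
          (c ∉ S → (g c).1 ∈ edge c ∧ (g c).2 = idxf (g c).1 (edge c))) := by
    intro n
    induction n with
    | zero =>
      intro C hcard _ _
      have hCe : C = ∅ := Finset.card_eq_zero.mp (Nat.le_zero.mp hcard)
      subst hCe
      exact ⟨fun x => (x, 0), by simp, by simp⟩
    | succ n ih =>
      intro C hcard hCV hCfeas
      by_cases hCS : (C \ S).Nonempty
      · obtain ⟨c, hcmem, hcmax⟩ :=
          Finset.exists_max_image (C \ S) (fun x => (edge x).card) hCS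
        obtain ⟨hcC, hcS⟩ := Finset.mem_sdiff.mp hcmem
        have hcV : c ∈ V := hCV hcC
        obtain ⟨heE, hce, htight⟩ := hedge c hcV hcS
        set C' := C.erase c with hC'
        have hC'sub : C' ⊆ C := Finset.erase_subset _ _
        have hC'card : C'.card ≤ n := by
          have h0 : C'.card = C.card - 1 := Finset.card_erase_of_mem hcC
          have h1 := Finset.card_pos.mpr ⟨c, hcC⟩
          omega
        have hC'feas : HyperFeasible E f C' := by
          intro e he
          exact le_trans
            (Finset.card_le_card (Finset.inter_subset_inter hC'sub (le_refl e)))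
            (hCfeas e he)
        obtain ⟨g', hinj', hprop'⟩ := ih C' hC'card (hC'sub.trans hCV) hC'feas
        -- there is a free slot (s0, idxf s0 (edge c)) with s0 ∈ S ∩ edge c
        have hfree : ∃ s ∈ S ∩ edge c, ∀ x ∈ C', g' x ≠ (s, idxf s (edge c)) := by
          by_contra hcon
          push_neg at hcon
          have hcon' : ∀ s : α, ∃ x, s ∈ S ∩ edge c →
              (x ∈ C' ∧ g' x = (s, idxf s (edge c))) := by
            intro s
            by_cases hsm : s ∈ S ∩ edge c
            · obtain ⟨x, hx1, hx2⟩ := hcon s hsm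
              exact ⟨x, fun _ => ⟨hx1, hx2⟩⟩
            · exact ⟨c, fun h => absurd h hsm⟩
          choose ch hch using hcon'
          have hmap : ∀ s ∈ S ∩ edge c, ch s ∈ (C ∩ edge c).erase c := by
            intro s hs
            obtain ⟨hxC', hgx⟩ := hch s hs
            obtain ⟨hxne, hxC⟩ := Finset.mem_erase.mp hxC'
            obtain ⟨hsS, hse⟩ := Finset.mem_inter.mp hs
            refine Finset.mem_erase.mpr ⟨hxne, Finset.mem_inter.mpr ⟨hxC, ?_⟩⟩
            by_cases hxS : ch s ∈ S
            · have := (hprop' (ch s) hxC').2.2.1 hxS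
              rw [this] at hgx
              have : ch s = s := congrArg Prod.fst hgx
              rw [this]; exact hse
            · obtain ⟨h1, h2⟩ := (hprop' (ch s) hxC').2.2.2 hxS
              rw [hgx] at h1 h2
              obtain ⟨hE2, hmem2, _⟩ := hedge (ch s) (hCV hxC) hxS
              obtain ⟨_, hlamid⟩ := hidxf s (hS hsS)
              rcases hlamid (edge (ch s)) hE2 (edge c) heE h1 hse h2.symm with
                h | h | h
              · exact h hmem2
              · have hle : (edge (ch s)).card ≤ (edge c).card :=
                  hcmax (ch s) (Finset.mem_sdiff.mpr ⟨hxC, hxS⟩)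
                have : edge c = edge (ch s) :=
                  Finset.eq_of_subset_of_card_le h hle
                rw [this]; exact hmem2
              · exact absurd (Finset.mem_inter.mpr ⟨h1, hse⟩)
                  (by rw [h]; exact Finset.notMem_empty s)
          have hinjch : Set.InjOn ch ↑(S ∩ edge c) := by
            intro s hs t ht hst
            have h1 := (hch s (Finset.mem_coe.mp hs)).2
            have h2 := (hch t (Finset.mem_coe.mp ht)).2
            rw [hst, h2] at h1
            exact (congrArg Prod.fst h1).symm
          have hcard1 : (S ∩ edge c).card ≤ ((C ∩ edge c).erase c).card :=
            Finset.card_le_card_of_injOn ch hmap hinjch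
          have h4 : ((C ∩ edge c).erase c).card = (C ∩ edge c).card - 1 :=
            Finset.card_erase_of_mem (Finset.mem_inter.mpr ⟨hcC, hce⟩)
          have h5 : 1 ≤ (C ∩ edge c).card :=
            Finset.card_pos.mpr ⟨c, Finset.mem_inter.mpr ⟨hcC, hce⟩⟩
          have h3 := hCfeas (edge c) heE
          omega
        obtain ⟨s0, hs0mem, hs0free⟩ := hfree
        obtain ⟨hs0S, hs0e⟩ := Finset.mem_inter.mp hs0mem
        refine ⟨Function.update g' c (s0, idxf s0 (edge c)), ?_, ?_⟩
        · intro x hx y hy hxy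
          by_cases hxc : x = c <;> by_cases hyc : y = c
          · rw [hxc, hyc]
          · rw [hxc, Function.update_self,
              Function.update_of_ne hyc] at hxy
            exact absurd hxy.symm
              (hs0free y (Finset.mem_erase.mpr ⟨hyc, Finset.mem_coe.mp hy⟩))
          · rw [hyc, Function.update_self,
              Function.update_of_ne hxc] at hxy
            exact absurd hxy
              (hs0free x (Finset.mem_erase.mpr ⟨hxc, Finset.mem_coe.mp hx⟩))
          · rw [Function.update_of_ne hxc, Function.update_of_ne hyc] at hxy
            exact hinj'
              (Finset.mem_coe.mpr (Finset.mem_erase.mpr ⟨hxc, Finset.mem_coe.mp hx⟩))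
              (Finset.mem_coe.mpr (Finset.mem_erase.mpr ⟨hyc, Finset.mem_coe.mp hy⟩))
              hxy
        · intro x hx
          by_cases hxc : x = c
          · subst hxc
            rw [Function.update_self]
            obtain ⟨hΔidx, _⟩ := hidxf s0 (hS hs0S)
            exact ⟨hs0S, hΔidx (edge x) heE hs0e,
              fun h => absurd h hcS, fun _ => ⟨hs0e, rfl⟩⟩
          · rw [Function.update_of_ne hxc]
            exact hprop' x (Finset.mem_erase.mpr ⟨hxc, hx⟩)
      · -- C ⊆ S
        have hsub : C ⊆ S := by
          intro x hx
          by_contra hxS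
          exact hCS ⟨x, Finset.mem_sdiff.mpr ⟨hx, hxS⟩⟩
        refine ⟨fun x => (x, 0), fun x _ y _ h => congrArg Prod.fst h, ?_⟩
        intro x hx
        exact ⟨hsub hx, hΔ, fun _ => rfl, fun h => absurd (hsub hx) h⟩
  have main : ∀ C ⊆ V, HyperFeasible E f C → C.card ≤ Δ * S.card := by
    intro C hCV hCfeas
    obtain ⟨g, hinj, hprop⟩ := key C.card C le_rfl hCV hCfeas
    calc C.card = (C.image g).card := (Finset.card_image_of_injOn hinj).symm
      _ ≤ (S ×ˢ Finset.range Δ).card := by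
          apply Finset.card_le_card
          intro p hp
          obtain ⟨x, hx, rfl⟩ := Finset.mem_image.mp hp
          obtain ⟨h1, h2, _⟩ := hprop x hx
          exact Finset.mem_product.mpr ⟨h1, Finset.mem_range.mpr h2⟩
      _ = Δ * S.card := by rw [Finset.card_product, Finset.card_range, mul_comm]
  refine ⟨main, csSup_le ⟨0, ∅, Finset.empty_subset V, fun e he => by simp, rfl⟩ ?_⟩
  rintro n ⟨C, hCV, hCfeas, rfl⟩
  exact main C hCV hCfeas
end

section
/- Let H = (V, E) be a hypergraph with quota function f: E → ℤ⁺ such that f(e) ≥ 1 for every hyperedge e. Let v ∈ V, and suppose the set of hyperedges containing v can be partitioned into at most Δ laminar subfamilies, where Δ ≥ 1. Then for every feasible set C with v ∉ C, there exists a feasible set C' with v ∈ C', C' ⊆ C ∪ {v}, and |C'| ≥ |C| + 1 − Δ. -/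
/-- If the hyperedges through a vertex `v` split into at most `Δ ≥ 1` laminar
families, then for every feasible set `C` not containing `v` there is a feasible
set `C'` containing `v`, included in `C ∪ {v}`, with `|C'| ≥ |C| + 1 − Δ`. -/
theorem stmt_3 {α : Type*} [DecidableEq α]
    (V : Finset α) (E : Finset (Finset α)) (f : Finset α → ℕ)
    (hq : ∀ e ∈ E, 1 ≤ f e) (hE : ∀ e ∈ E, e ⊆ V)
    (Δ : ℕ) (hΔ : 1 ≤ Δ)
    (v : α) (hv : v ∈ V)
    (hlam : ∃ idx : Finset α → ℕ,
      (∀ e ∈ E, v ∈ e → idx e < Δ) ∧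
      (∀ X ∈ E, ∀ Y ∈ E, v ∈ X → v ∈ Y → idx X = idx Y →
        (X ⊆ Y ∨ Y ⊆ X ∨ X ∩ Y = ∅)))
    (C : Finset α) (hC : C ⊆ V) (hCfeas : HyperFeasible E f C) (hvC : v ∉ C) :
    ∃ C' : Finset α, HyperFeasible E f C' ∧ v ∈ C' ∧ C' ⊆ insert v C ∧
      (C.card : ℤ) + 1 - Δ ≤ (C'.card : ℤ) := by
  classical
  obtain ⟨idx, hidx, hchain⟩ := hlam
  -- tight edges of class i
  set T : ℕ → Finset (Finset α) :=
    fun i => E.filter (fun e => v ∈ e ∧ idx e = i ∧ f e ≤ (C ∩ e).card) with hT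
  have hpick : ∀ i, ∃ u : α, (T i).Nonempty →
      u ∈ C ∧ ∀ e ∈ T i, u ∈ e := by
    intro i
    by_cases h : (T i).Nonempty
    · obtain ⟨e0, he0, hmin⟩ := Finset.exists_min_image (T i) (fun e => e.card) h
      have he0E : e0 ∈ E := (Finset.mem_filter.1 he0).1
      obtain ⟨hv0, hi0, hc0⟩ := (Finset.mem_filter.1 he0).2
      have hsub : ∀ e ∈ T i, e0 ⊆ e := by
        intro e he
        have heE : e ∈ E := (Finset.mem_filter.1 he).1
        obtain ⟨hve, hie, hce⟩ := (Finset.mem_filter.1 he).2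
        rcases hchain e0 he0E e heE hv0 hve (by rw [hi0, hie]) with h1 | h1 | h1
        · exact h1
        · have : e = e0 := Finset.eq_of_subset_of_card_le h1 (hmin e he)
          rw [this]
        · exact absurd (Finset.mem_inter.2 ⟨hv0, hve⟩) (by rw [h1]; simp)
      have hcard : 0 < (C ∩ e0).card := lt_of_lt_of_le (hq e0 he0E) hc0
      obtain ⟨u, hu⟩ := Finset.card_pos.1 hcard
      obtain ⟨huC, hue0⟩ := Finset.mem_inter.1 hu
      exact ⟨u, fun _ => ⟨huC, fun e he => hsub e he hue0⟩⟩
    · exact ⟨v, fun hn => absurd hn h⟩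
  choose u hu using hpick
  set D : Finset α := (Finset.range Δ).image u with hD
  refine ⟨insert v (C \ D), ?_, Finset.mem_insert_self _ _, ?_, ?_⟩
  · -- feasibility
    intro e heE
    by_cases hve : v ∈ e
    · have hsub1 : insert v (C \ D) ∩ e ⊆ insert v ((C \ D) ∩ e) := by
        intro x hx
        obtain ⟨hx1, hx2⟩ := Finset.mem_inter.1 hx
        rcases Finset.mem_insert.1 hx1 with rfl | hx1
        · exact Finset.mem_insert_self _ _
        · exact Finset.mem_insert_of_mem (Finset.mem_inter.2 ⟨hx1, hx2⟩)
      by_cases htight : f e ≤ (C ∩ e).card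
      · -- e is tight, of class idx e
        have heT : e ∈ T (idx e) := Finset.mem_filter.2 ⟨heE, hve, rfl, htight⟩
        have hne : (T (idx e)).Nonempty := ⟨e, heT⟩
        obtain ⟨huC, hue⟩ := hu (idx e) hne
        have huee : u (idx e) ∈ e := hue e heT
        have huD : u (idx e) ∈ D := by
          rw [hD]
          exact Finset.mem_image.2 ⟨idx e, Finset.mem_range.2 (hidx e heE hve), rfl⟩
        have hsub2 : (C \ D) ∩ e ⊆ (C ∩ e).erase (u (idx e)) := by
          intro x hx
          obtain ⟨hx1, hx2⟩ := Finset.mem_inter.1 hx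
          obtain ⟨hxC, hxD⟩ := Finset.mem_sdiff.1 hx1
          refine Finset.mem_erase.2 ⟨?_, Finset.mem_inter.2 ⟨hxC, hx2⟩⟩
          rintro rfl; exact hxD huD
        calc (insert v (C \ D) ∩ e).card ≤ (insert v ((C \ D) ∩ e)).card :=
              Finset.card_le_card hsub1
          _ ≤ ((C \ D) ∩ e).card + 1 := Finset.card_insert_le _ _
          _ ≤ ((C ∩ e).erase (u (idx e))).card + 1 := by
              exact Nat.add_le_add_right (Finset.card_le_card hsub2) 1
          _ = (C ∩ e).card - 1 + 1 := by
              rw [Finset.card_erase_of_mem (Finset.mem_inter.2 ⟨huC, huee⟩)]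
          _ = (C ∩ e).card := by
              have : 1 ≤ (C ∩ e).card :=
                Finset.card_pos.2 ⟨u (idx e), Finset.mem_inter.2 ⟨huC, huee⟩⟩
              omega
          _ = f e := le_antisymm (hCfeas e heE) htight
      · -- not tight
        push_neg at htight
        calc (insert v (C \ D) ∩ e).card ≤ (insert v ((C \ D) ∩ e)).card :=
              Finset.card_le_card hsub1
          _ ≤ ((C \ D) ∩ e).card + 1 := Finset.card_insert_le _ _
          _ ≤ (C ∩ e).card + 1 := by
              refine Nat.add_le_add_right (Finset.card_le_card ?_) 1
              exact Finset.inter_subset_inter (Finset.sdiff_subset) (le_refl e)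
          _ ≤ f e := htight
    · -- v ∉ e
      have : insert v (C \ D) ∩ e ⊆ C ∩ e := by
        intro x hx
        obtain ⟨hx1, hx2⟩ := Finset.mem_inter.1 hx
        rcases Finset.mem_insert.1 hx1 with rfl | hx1
        · exact absurd hx2 hve
        · exact Finset.mem_inter.2 ⟨(Finset.mem_sdiff.1 hx1).1, hx2⟩
      exact le_trans (Finset.card_le_card this) (hCfeas e heE)
  · -- subset
    exact Finset.insert_subset_insert v (Finset.sdiff_subset)
  · -- cardinality
    have h1 : C.card ≤ (C \ D).card + D.card := Finset.card_le_card_sdiff_add_card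
    have h2 : D.card ≤ Δ := le_trans Finset.card_image_le (le_of_eq (Finset.card_range Δ))
    have h3 : (insert v (C \ D)).card = (C \ D).card + 1 := by
      rw [Finset.card_insert_of_notMem]
      intro h; exact hvC (Finset.mem_sdiff.1 h).1
    rw [h3]
    push_cast
    omega
end

section
/- Consider a many-to-many classified matching instance: a bipartite graph G = (A ∪ P, E) where each platform p has a family of classes, each a subset of the edges incident to p with a positive integer quota, and each item a has a family of classes, each a subset of the edges incident to a with a positive integer quota. A set M ⊆ E is feasible if for every class (of any item or platform) with quota q, at most q edges of M lie in that class. Suppose that for every edge e = (a, p) ∈ E, the collection of all classes (of a and of p) that contain e can be partitioned into at most Δ + 1 laminar subfamilies. Then for every maximal feasible set M ⊆ E and every feasible set M* ⊆ E, we have |M*| ≤ (Δ + 1)·|M|. -/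
/-!
For every `e ∈ M* \ M`, maximality of `M` yields a class `B e` of `e` that `M` fills to its quota,
so `|M* ∩ B e| ≤ |M ∩ B e|`; among such classes take one of maximum size. Counting over the
family of chosen classes gives `|M* \ M| ≤ Σ_C |(M \ M*) ∩ C|`. The chosen classes form an
antichain for inclusion: if `B e ⊆ B e'`, then `B e'` is also a class of `e` filled by `M`, so by
maximality `B e = B e'`. Hence the chosen classes through a fixed edge `f` lie in pairwise distinct
laminar subfamilies at `f` (two members of one laminar subfamily through `f` are nested), so
`f` lies in at most `Δ + 1` of them, and `|M* \ M| ≤ (Δ + 1)·|M \ M*|`.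
-/

/-- In the many-to-many setting, `M ⊆ E` is feasible if every class of every
item and every class of every platform (each class being a set of edges with a
quota) contains at most its quota of edges of `M`. -/
def FeasibleMM {α β : Type*} [DecidableEq α] [DecidableEq β]
    (E : Finset (α × β))
    (Ci : α → Finset (Finset (α × β))) (qi : α → Finset (α × β) → ℕ)
    (Cp : β → Finset (Finset (α × β))) (qp : β → Finset (α × β) → ℕ)
    (M : Finset (α × β)) : Prop :=
  M ⊆ E ∧
  (∀ a : α, ∀ C ∈ Ci a, (M ∩ C).card ≤ qi a C) ∧
  (∀ p : β, ∀ C ∈ Cp p, (M ∩ C).card ≤ qp p C)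

open Finset

namespace Finset

variable {ι : Type*} [DecidableEq ι]

theorem card_sdiff_inter_le_of_card_inter_le {s t C : Finset ι} (h : #(s ∩ C) ≤ #(t ∩ C)) :
    #((s \ t) ∩ C) ≤ #((t \ s) ∩ C) := by
  have hs := card_inter_add_card_sdiff (s ∩ C) t
  have ht := card_inter_add_card_sdiff (t ∩ C) s
  have hcomm : t ∩ C ∩ s = s ∩ C ∩ t := by
    rw [inter_right_comm, inter_comm t s, inter_right_comm]
  rw [hcomm] at ht
  rw [sdiff_inter_right_comm, sdiff_inter_right_comm]
  omega

theorem card_le_mul_card_of_card_sdiff_le {s t : Finset ι} {k : ℕ} (hk : 1 ≤ k)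
    (h : #(s \ t) ≤ k * #(t \ s)) : #s ≤ k * #t := by
  have hs := card_inter_add_card_sdiff s t
  have ht := card_inter_add_card_sdiff t s
  rw [inter_comm] at ht
  nlinarith

theorem card_le_mul_card_of_forall_card_inter_le {D N : Finset ι} {𝓑 : Finset (Finset ι)} {k : ℕ}
    (hcover : ∀ e ∈ D, ∃ C ∈ 𝓑, e ∈ C) (hle : ∀ C ∈ 𝓑, #(D ∩ C) ≤ #(N ∩ C))
    (hdeg : ∀ f ∈ N, #{C ∈ 𝓑 | f ∈ C} ≤ k) : #D ≤ k * #N :=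
  calc #D = #D * 1 := (mul_one _).symm
    _ ≤ ∑ C ∈ 𝓑, #(D ∩ C) := le_sum_card_inter fun e he ↦
        one_le_card.2 <| (hcover e he).imp fun _ hC ↦ mem_filter.2 hC
    _ ≤ ∑ C ∈ 𝓑, #(N ∩ C) := sum_le_sum hle
    _ ≤ #N * k := sum_card_inter_le hdeg
    _ = k * #N := mul_comm _ _

theorem card_le_of_laminar_colouring {𝓑 : Finset (Finset ι)} {f : ι} {k : ℕ}
    (idx : Finset ι → ℕ) (hf : ∀ C ∈ 𝓑, f ∈ C) (hanti : IsAntichain (· ⊆ ·) (𝓑 : Set (Finset ι)))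
    (hidx : ∀ C ∈ 𝓑, idx C < k)
    (hlam : ∀ X ∈ 𝓑, ∀ Y ∈ 𝓑, idx X = idx Y → X ⊆ Y ∨ Y ⊆ X ∨ X ∩ Y = ∅) : #𝓑 ≤ k := by
  have hinj : Set.InjOn idx 𝓑 := by
    intro X hX Y hY hXY
    by_contra hne
    rcases hlam X hX Y hY hXY with hsub | hsub | hdisj
    · exact hanti hX hY hne hsub
    · exact hanti hY hX (Ne.symm hne) hsub
    · simpa [hdisj] using mem_inter.2 ⟨hf X hX, hf Y hY⟩
  simpa using card_le_card_of_injOn idx (fun C hC ↦ mem_range.2 (hidx C hC)) hinj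

theorem mem_and_card_inter_eq_of_lt_card_insert_inter {s C : Finset ι} {e : ι} {q : ℕ}
    (he : e ∉ s) (hs : #(s ∩ C) ≤ q) (hlt : q < #(insert e s ∩ C)) :
    e ∈ C ∧ #(s ∩ C) = q := by
  by_cases heC : e ∈ C
  · rw [insert_inter_of_mem heC, card_insert_of_notMem fun h ↦ he (mem_inter.1 h).1] at hlt
    exact ⟨heC, by omega⟩
  · rw [insert_inter_of_notMem heC] at hlt
    omega

end Finset

namespace FeasibleMM

variable {α β : Type*} [DecidableEq α] [DecidableEq β]
  {Ci : α → Finset (Finset (α × β))} {Cp : β → Finset (Finset (α × β))}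

variable (Ci Cp) in
def classesOf (e : α × β) : Finset (Finset (α × β)) := Ci e.1 ∪ Cp e.2

variable (Ci Cp) in
def blockingClasses (M Mstar : Finset (α × β)) (e : α × β) : Finset (Finset (α × β)) :=
  {C ∈ classesOf Ci Cp e | e ∈ C ∧ #(Mstar ∩ C) ≤ #(M ∩ C)}

section
variable (hCi : ∀ a, ∀ C ∈ Ci a, ∀ e ∈ C, e.1 = a) (hCp : ∀ p, ∀ C ∈ Cp p, ∀ e ∈ C, e.2 = p)
include hCi hCp

theorem mem_classesOf_of_mem {e e' : α × β} {C : Finset (α × β)}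
    (hC : C ∈ classesOf Ci Cp e') (he : e ∈ C) : C ∈ classesOf Ci Cp e := by
  rcases mem_union.1 hC with h | h
  · exact mem_union_left _ (hCi _ C h e he ▸ h)
  · exact mem_union_right _ (hCp _ C h e he ▸ h)

theorem blockingClasses_nonempty {E : Finset (α × β)} {qi : α → Finset (α × β) → ℕ}
    {qp : β → Finset (α × β) → ℕ} {M Mstar : Finset (α × β)} {e : α × β}
    (hM : FeasibleMM E Ci qi Cp qp M) (hMstar : FeasibleMM E Ci qi Cp qp Mstar)
    (heE : e ∈ E) (heM : e ∉ M) (hins : ¬ FeasibleMM E Ci qi Cp qp (insert e M)) :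
    (blockingClasses Ci Cp M Mstar e).Nonempty := by
  simp only [FeasibleMM, insert_subset heE hM.1, true_and, not_and_or] at hins
  push Not at hins
  rcases hins with ⟨a, C, hC, hlt⟩ | ⟨p, C, hC, hlt⟩
  · obtain ⟨heC, hq⟩ := mem_and_card_inter_eq_of_lt_card_insert_inter heM (hM.2.1 a C hC) hlt
    exact ⟨C, mem_filter.2 ⟨mem_union_left _ (hCi a C hC e heC ▸ hC), heC,
      hq ▸ hMstar.2.1 a C hC⟩⟩
  · obtain ⟨heC, hq⟩ := mem_and_card_inter_eq_of_lt_card_insert_inter heM (hM.2.2 p C hC) hlt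
    exact ⟨C, mem_filter.2 ⟨mem_union_right _ (hCp p C hC e heC ▸ hC), heC,
      hq ▸ hMstar.2.2 p C hC⟩⟩

theorem mem_blockingClasses_of_subset {M Mstar X Y : Finset (α × β)} {e e' : α × β}
    (hX : X ∈ blockingClasses Ci Cp M Mstar e) (hY : Y ∈ blockingClasses Ci Cp M Mstar e')
    (hXY : X ⊆ Y) : Y ∈ blockingClasses Ci Cp M Mstar e := by
  rw [blockingClasses, mem_filter] at hX hY ⊢
  have heY := hXY hX.2.1
  exact ⟨mem_classesOf_of_mem hCi hCp hY.1 heY, heY, hY.2.2⟩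

theorem isAntichain_image_of_forall_card_le {M Mstar : Finset (α × β)} {D : Finset (α × β)}
    {B : α × β → Finset (α × β)} (hB : ∀ e ∈ D, B e ∈ blockingClasses Ci Cp M Mstar e)
    (hBmax : ∀ e ∈ D, ∀ C ∈ blockingClasses Ci Cp M Mstar e, #C ≤ #(B e)) :
    IsAntichain (· ⊆ ·) (D.image B : Set (Finset (α × β))) := by
  rintro _ hX _ hY hne hXY
  obtain ⟨e, he, rfl⟩ := mem_image.1 (mem_coe.1 hX)
  obtain ⟨e', he', rfl⟩ := mem_image.1 (mem_coe.1 hY)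
  have hY' := mem_blockingClasses_of_subset hCi hCp (hB e he) (hB e' he') hXY
  exact hne (eq_of_subset_of_card_le hXY (hBmax e he _ hY'))

theorem card_filter_mem_le_of_isAntichain {𝓑 : Finset (Finset (α × β))}
    (h𝓑 : ∀ C ∈ 𝓑, ∃ e, C ∈ classesOf Ci Cp e)
    (hanti : IsAntichain (· ⊆ ·) (𝓑 : Set (Finset (α × β))))
    {f : α × β} {k : ℕ} (idx : Finset (α × β) → ℕ)
    (hidx : ∀ C ∈ classesOf Ci Cp f, f ∈ C → idx C < k)
    (hlam : ∀ X ∈ classesOf Ci Cp f, ∀ Y ∈ classesOf Ci Cp f, f ∈ X → f ∈ Y →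
      idx X = idx Y → X ⊆ Y ∨ Y ⊆ X ∨ X ∩ Y = ∅) :
    #{C ∈ 𝓑 | f ∈ C} ≤ k := by
  have hclass : ∀ C ∈ {C ∈ 𝓑 | f ∈ C}, f ∈ C ∧ C ∈ classesOf Ci Cp f := fun C hC ↦ by
    obtain ⟨hC𝓑, hfC⟩ := mem_filter.1 hC
    obtain ⟨e, he⟩ := h𝓑 C hC𝓑
    exact ⟨hfC, mem_classesOf_of_mem hCi hCp he hfC⟩
  refine card_le_of_laminar_colouring idx (fun C hC ↦ (hclass C hC).1)
    (hanti.subset (coe_subset.2 (filter_subset _ _)))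
    (fun C hC ↦ hidx C (hclass C hC).2 (hclass C hC).1) fun X hX Y hY ↦ ?_
  exact hlam X (hclass X hX).2 Y (hclass Y hY).2 (hclass X hX).1 (hclass Y hY).1

end

end FeasibleMM

open FeasibleMM in
theorem stmt_5_general {α β : Type*} [DecidableEq α] [DecidableEq β]
    (E : Finset (α × β))
    (Ci : α → Finset (Finset (α × β))) (qi : α → Finset (α × β) → ℕ)
    (Cp : β → Finset (Finset (α × β))) (qp : β → Finset (α × β) → ℕ)
    (hCi : ∀ a : α, ∀ C ∈ Ci a, ∀ e ∈ C, e ∈ E ∧ e.1 = a)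
    (hCp : ∀ p : β, ∀ C ∈ Cp p, ∀ e ∈ C, e ∈ E ∧ e.2 = p)
    (Δ : ℕ)
    (hlam : ∀ e ∈ E, ∃ idx : Finset (α × β) → ℕ,
      (∀ C : Finset (α × β), (C ∈ Ci e.1 ∨ C ∈ Cp e.2) → e ∈ C → idx C < Δ + 1) ∧
      (∀ X Y : Finset (α × β), (X ∈ Ci e.1 ∨ X ∈ Cp e.2) → (Y ∈ Ci e.1 ∨ Y ∈ Cp e.2) →
        e ∈ X → e ∈ Y → idx X = idx Y → (X ⊆ Y ∨ Y ⊆ X ∨ X ∩ Y = ∅)))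
    (M : Finset (α × β)) (hM : FeasibleMM E Ci qi Cp qp M)
    (hMmax : ∀ e ∈ E, e ∉ M → ¬ FeasibleMM E Ci qi Cp qp (insert e M))
    (Mstar : Finset (α × β)) (hMstar : FeasibleMM E Ci qi Cp qp Mstar) :
    Mstar.card ≤ (Δ + 1) * M.card := by
  have hCi' : ∀ a, ∀ C ∈ Ci a, ∀ e ∈ C, e.1 = a := fun a C hC e he ↦ (hCi a C hC e he).2
  have hCp' : ∀ p, ∀ C ∈ Cp p, ∀ e ∈ C, e.2 = p := fun p C hC e he ↦ (hCp p C hC e he).2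
  have hblock : ∀ e ∈ Mstar \ M, (blockingClasses Ci Cp M Mstar e).Nonempty := fun e he ↦
    have heE := hMstar.1 (mem_sdiff.1 he).1
    blockingClasses_nonempty hCi' hCp' hM hMstar heE (mem_sdiff.1 he).2
      (hMmax e heE (mem_sdiff.1 he).2)
  choose! B hB hBmax using fun e he ↦ exists_max_image _ card (hblock e he)
  have hanti := isAntichain_image_of_forall_card_le hCi' hCp' hB hBmax
  refine card_le_mul_card_of_card_sdiff_le (Nat.le_add_left 1 Δ) <|
    card_le_mul_card_of_forall_card_inter_le (𝓑 := (Mstar \ M).image B) ?cover ?exchange ?degree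
  case cover => exact fun e he ↦ ⟨B e, mem_image_of_mem B he, (mem_filter.1 (hB e he)).2.1⟩
  case exchange =>
    rintro _ hC
    obtain ⟨e, he, rfl⟩ := mem_image.1 hC
    exact card_sdiff_inter_le_of_card_inter_le (mem_filter.1 (hB e he)).2.2
  case degree =>
    intro f hf
    obtain ⟨idx, hidx, hlamf⟩ := hlam f (hM.1 (mem_sdiff.1 hf).1)
    have hclasses : ∀ C ∈ (Mstar \ M).image B, ∃ e, C ∈ classesOf Ci Cp e := by
      rintro _ hC
      obtain ⟨e, he, rfl⟩ := mem_image.1 hC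
      exact ⟨e, (mem_filter.1 (hB e he)).1⟩
    exact card_filter_mem_le_of_isAntichain hCi' hCp' hclasses hanti idx
      (fun C hC ↦ hidx C (mem_union.1 hC))
      fun X hX Y hY ↦ hlamf X Y (mem_union.1 hX) (mem_union.1 hY)

/-- Many-to-many classified matching: if for every edge `e = (a, p)` the classes
of `a` and of `p` containing `e` split into at most `Δ + 1` laminar families,
then every maximal feasible set `M` and every feasible set `M*` satisfy
`|M*| ≤ (Δ + 1)·|M|`. -/
theorem stmt_5 {α β : Type*} [DecidableEq α] [DecidableEq β]
    (E : Finset (α × β))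
    (Ci : α → Finset (Finset (α × β))) (qi : α → Finset (α × β) → ℕ)
    (Cp : β → Finset (Finset (α × β))) (qp : β → Finset (α × β) → ℕ)
    (hCi : ∀ a : α, ∀ C ∈ Ci a, ∀ e ∈ C, e ∈ E ∧ e.1 = a)
    (hCp : ∀ p : β, ∀ C ∈ Cp p, ∀ e ∈ C, e ∈ E ∧ e.2 = p)
    (hqi : ∀ a : α, ∀ C ∈ Ci a, 1 ≤ qi a C)
    (hqp : ∀ p : β, ∀ C ∈ Cp p, 1 ≤ qp p C)
    (Δ : ℕ)
    (hlam : ∀ e ∈ E, ∃ idx : Finset (α × β) → ℕ,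
      (∀ C : Finset (α × β), (C ∈ Ci e.1 ∨ C ∈ Cp e.2) → e ∈ C → idx C < Δ + 1) ∧
      (∀ X Y : Finset (α × β), (X ∈ Ci e.1 ∨ X ∈ Cp e.2) → (Y ∈ Ci e.1 ∨ Y ∈ Cp e.2) →
        e ∈ X → e ∈ Y → idx X = idx Y → (X ⊆ Y ∨ Y ⊆ X ∨ X ∩ Y = ∅)))
    (M : Finset (α × β)) (hM : FeasibleMM E Ci qi Cp qp M)
    (hMmax : ∀ e ∈ E, e ∉ M → ¬ FeasibleMM E Ci qi Cp qp (insert e M))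
    (Mstar : Finset (α × β)) (hMstar : FeasibleMM E Ci qi Cp qp Mstar) :
    Mstar.card ≤ (Δ + 1) * M.card :=
  stmt_5_general E Ci qi Cp qp hCi hCp Δ hlam M hM hMmax Mstar hMstar
end

section
/- Let H = (V, E) be a hypergraph with |V| = n vertices and quota function f: E → ℤ⁺ with f(e) ≥ 1 for all e, and suppose ∑_{v ∈ V} deg(v) ≤ Δ·n for a real Δ ≥ 1. Let C* ⊆ V be a feasible set with |C*| = r·n for some real r > 0, and let L = {v ∈ V : deg(v) ≤ 2Δ/r}. Then every set S ⊆ L that is feasible and maximal within L (i.e., S ∪ {v} is infeasible for every v ∈ L \ S) satisfies |S| ≥ (r/(4Δ))·|C*|. -/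
set_option maxHeartbeats 1000000


/-- Bounded average degree: if the total degree is at most `Δ·n` (`Δ ≥ 1`) and
`C*` is a feasible set of size `r·n`, then every feasible set `S` that is
maximal within the set `L` of vertices of degree at most `2Δ/r` satisfies
`|S| ≥ (r/(4Δ))·|C*|`. -/
theorem stmt_9 {α : Type*} [DecidableEq α]
    (V : Finset α) (E : Finset (Finset α)) (hE : ∀ e ∈ E, e ⊆ V)
    (f : Finset α → ℕ) (hq : ∀ e ∈ E, 1 ≤ f e)
    (Δ : ℝ) (hΔ : 1 ≤ Δ)
    (hdeg : (∑ v ∈ V, ((E.filter (fun e => v ∈ e)).card : ℝ)) ≤ Δ * V.card)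
    (Cstar : Finset α) (hCV : Cstar ⊆ V) (hCfeas : HyperFeasible E f Cstar)
    (r : ℝ) (hr : 0 < r) (hCcard : (Cstar.card : ℝ) = r * V.card)
    (L : Finset α)
    (hL : L = V.filter (fun v => ((E.filter (fun e => v ∈ e)).card : ℝ) ≤ 2 * Δ / r))
    (S : Finset α) (hSL : S ⊆ L) (hSfeas : HyperFeasible E f S)
    (hSmax : ∀ v ∈ L \ S, ¬ HyperFeasible E f (insert v S)) :
    (S.card : ℝ) ≥ (r / (4 * Δ)) * Cstar.card := by
  classical
  subst hL
  set L : Finset α := V.filter (fun v => ((E.filter (fun e => v ∈ e)).card : ℝ) ≤ 2 * Δ / r)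
    with hLdef
  by_cases hn0 : V.card = 0
  · have hC0 : Cstar.card = 0 := Nat.le_zero.mp (hn0 ▸ Finset.card_le_card hCV)
    rw [hC0]
    simp
  have hΔpos : (0:ℝ) < Δ := lt_of_lt_of_le one_pos hΔ
  have hnpos : (0:ℝ) < V.card := by
    have : 0 < V.card := Nat.pos_of_ne_zero hn0
    exact_mod_cast this
  have hn1 : (1:ℝ) ≤ V.card := by exact_mod_cast Nat.one_le_iff_ne_zero.mpr hn0
  have hr1 : r ≤ 1 := by
    have h := Finset.card_le_card hCV
    have h' : (Cstar.card : ℝ) ≤ V.card := by exact_mod_cast h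
    rw [hCcard] at h'
    nlinarith
  set c : ℝ := 2 * Δ / r with hcdef
  have hc : r * c = 2 * Δ := by
    rw [hcdef]; field_simp
  have hc1 : (1:ℝ) ≤ c := by
    rw [hcdef, le_div_iff₀ hr]; nlinarith
  have hcpos : (0:ℝ) < c := lt_of_lt_of_le one_pos hc1
  -- degree abbreviation
  set deg : α → ℕ := fun v => (E.filter (fun e => v ∈ e)).card with hdegdef
  have hmemL : ∀ v, v ∈ L ↔ v ∈ V ∧ (deg v : ℝ) ≤ c := by
    intro v; rw [hLdef, Finset.mem_filter]
  -- Step A: vertices of Cstar outside L have high degree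
  have hA : ((Cstar \ L).card : ℝ) * c ≤ Δ * V.card := by
    have h1 : ∀ v ∈ Cstar \ L, c ≤ (deg v : ℝ) := by
      intro v hv
      rw [Finset.mem_sdiff] at hv
      have hvV : v ∈ V := hCV hv.1
      have := hv.2
      rw [hmemL] at this
      push_neg at this
      exact (this hvV).le
    calc ((Cstar \ L).card : ℝ) * c
        = (Cstar \ L).card • c := by rw [nsmul_eq_mul]
      _ ≤ ∑ v ∈ Cstar \ L, (deg v : ℝ) := Finset.card_nsmul_le_sum _ _ _ h1
      _ ≤ ∑ v ∈ V, (deg v : ℝ) := by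
          apply Finset.sum_le_sum_of_subset_of_nonneg
          · intro v hv
            exact hCV (Finset.mem_sdiff.mp hv).1
          · intro v _ _; positivity
      _ ≤ Δ * V.card := hdeg
  -- Step B: |Cstar ∩ L| ≥ r n / 2
  have hsplitC : ((Cstar ∩ L).card : ℝ) + ((Cstar \ L).card : ℝ) = r * V.card := by
    have := Finset.card_inter_add_card_sdiff Cstar L
    have h' : ((Cstar ∩ L).card : ℝ) + ((Cstar \ L).card : ℝ) = Cstar.card := by
      exact_mod_cast this
    rw [h', hCcard]
  have hB : r * V.card / 2 ≤ ((Cstar ∩ L).card : ℝ) := by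
    have hDc : r * (((Cstar \ L).card : ℝ) * c) = 2 * Δ * ((Cstar \ L).card : ℝ) := by
      rw [← mul_assoc, mul_comm r _, mul_assoc, hc]; ring
    have hA' := mul_le_mul_of_nonneg_left hA hr.le
    nlinarith [hA', hDc, hΔpos, hsplitC]
  -- Step C: blocking edges
  have hblock : ∀ v ∈ (Cstar ∩ L) \ S, ∃ e ∈ E, v ∈ e ∧ f e ≤ (S ∩ e).card := by
    intro v hv
    rw [Finset.mem_sdiff, Finset.mem_inter] at hv
    have hmem : v ∈ L \ S := Finset.mem_sdiff.mpr ⟨hv.1.2, hv.2⟩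
    have hnf := hSmax v hmem
    rw [HyperFeasible] at hnf
    push_neg at hnf
    obtain ⟨e, he, hcard⟩ := hnf
    have hve : v ∈ e := by
      by_contra hvnot
      rw [Finset.insert_inter_of_notMem hvnot] at hcard
      exact absurd (hSfeas e he) (not_le.mpr hcard)
    refine ⟨e, he, hve, ?_⟩
    have hsub : insert v S ∩ e ⊆ insert v (S ∩ e) := by
      rw [Finset.insert_inter_of_mem hve]
    have h2 := (Finset.card_le_card hsub).trans (Finset.card_insert_le _ _)
    omega
  set B : Finset α := (Cstar ∩ L) \ S with hBdef
  have hCnat : B.card ≤ ∑ e ∈ E, ((S \ Cstar) ∩ e).card := by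
    set g : α → Finset α := fun v =>
      if h : ∃ e ∈ E, v ∈ e ∧ f e ≤ (S ∩ e).card then h.choose else ∅ with hg
    have hgE : ∀ v ∈ B, g v ∈ E ∧ v ∈ g v ∧ f (g v) ≤ (S ∩ g v).card := by
      intro v hv
      have h := hblock v hv
      simp only [hg, dif_pos h]
      exact ⟨h.choose_spec.1, h.choose_spec.2.1, h.choose_spec.2.2⟩
    rw [Finset.card_eq_sum_card_fiberwise (fun v hv => (hgE v hv).1)]
    apply Finset.sum_le_sum
    intro e he
    by_cases hne : (B.filter (fun v => g v = e)).Nonempty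
    · obtain ⟨v₀, hv₀⟩ := hne
      rw [Finset.mem_filter] at hv₀
      have hfe : f e ≤ (S ∩ e).card := hv₀.2 ▸ (hgE v₀ hv₀.1).2.2
      have hfib : B.filter (fun v => g v = e) ⊆ (Cstar ∩ e) \ S := by
        intro v hv
        rw [Finset.mem_filter] at hv
        have hvB := hv.1
        have hve : v ∈ e := hv.2 ▸ (hgE v hvB).2.1
        rw [hBdef, Finset.mem_sdiff, Finset.mem_inter] at hvB
        rw [Finset.mem_sdiff, Finset.mem_inter]
        exact ⟨⟨hvB.1.1, hve⟩, hvB.2⟩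
      have h1 : ((Cstar ∩ e) \ S).card + ((Cstar ∩ e) ∩ S).card = (Cstar ∩ e).card :=
        Finset.card_sdiff_add_card_inter _ _
      have h2 : ((S ∩ e) \ Cstar).card + ((S ∩ e) ∩ Cstar).card = (S ∩ e).card :=
        Finset.card_sdiff_add_card_inter _ _
      have h3 : (Cstar ∩ e) ∩ S = (S ∩ e) ∩ Cstar := by
        ext x
        simp only [Finset.mem_inter]
        tauto
      have h4 : (S ∩ e) \ Cstar = (S \ Cstar) ∩ e := by
        ext x
        simp only [Finset.mem_inter, Finset.mem_sdiff]
        tauto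
      have h5 : (Cstar ∩ e).card ≤ f e := hCfeas e he
      have h6 := Finset.card_le_card hfib
      rw [h3] at h1
      rw [h4] at h2
      omega
    · rw [Finset.not_nonempty_iff_eq_empty] at hne
      simp [hne]
  -- Step D: double counting
  have hdc : ∑ e ∈ E, ((S \ Cstar) ∩ e).card = ∑ u ∈ S \ Cstar, deg u := by
    have h1 : ∀ e ∈ E, ((S \ Cstar) ∩ e).card
        = ∑ u ∈ S \ Cstar, if u ∈ e then 1 else 0 := by
      intro e _
      rw [← Finset.filter_mem_eq_inter, Finset.card_filter]
    rw [Finset.sum_congr rfl h1, Finset.sum_comm]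
    apply Finset.sum_congr rfl
    intro u _
    show (∑ x ∈ E, if u ∈ x then 1 else 0) = (E.filter (fun e => u ∈ e)).card
    rw [Finset.card_filter]
  -- Step E: |Cstar ∩ L| ≤ c * |S|
  have hdegS : ∀ u ∈ S, (deg u : ℝ) ≤ c := by
    intro u hu
    exact ((hmemL u).mp (hSL hu)).2
  have hsum : (↑(∑ u ∈ S \ Cstar, deg u) : ℝ) ≤ c * ((S \ Cstar).card : ℝ) := by
    push_cast
    calc ∑ u ∈ S \ Cstar, (deg u : ℝ)
        ≤ (S \ Cstar).card • c := by
          apply Finset.sum_le_card_nsmul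
          intro u hu
          exact hdegS u (Finset.mem_sdiff.mp hu).1
      _ = c * ((S \ Cstar).card : ℝ) := by rw [nsmul_eq_mul]; ring
  have hBreal : (B.card : ℝ) ≤ c * ((S \ Cstar).card : ℝ) := by
    refine le_trans ?_ hsum
    exact_mod_cast hdc ▸ hCnat
  have hsplitCL : ((Cstar ∩ L).card : ℝ) = (((Cstar ∩ L) ∩ S).card : ℝ) + (B.card : ℝ) := by
    rw [hBdef]
    exact_mod_cast (Finset.card_inter_add_card_sdiff (Cstar ∩ L) S).symm
  have hCLS : (((Cstar ∩ L) ∩ S).card : ℝ) ≤ ((S ∩ Cstar).card : ℝ) := by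
    have : (Cstar ∩ L) ∩ S ⊆ S ∩ Cstar := by
      intro x hx
      simp only [Finset.mem_inter] at hx ⊢
      tauto
    exact_mod_cast Finset.card_le_card this
  have hSsplit : ((S ∩ Cstar).card : ℝ) + ((S \ Cstar).card : ℝ) = (S.card : ℝ) := by
    exact_mod_cast Finset.card_inter_add_card_sdiff S Cstar
  have hE2 : ((Cstar ∩ L).card : ℝ) ≤ c * S.card := by
    have hSC0 : (0:ℝ) ≤ ((S ∩ Cstar).card : ℝ) := by positivity
    nlinarith [hsplitCL, hCLS, hBreal, hSsplit, hc1, hSC0]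
  -- conclude
  have key : r * V.card / 2 ≤ c * S.card := le_trans hB hE2
  rw [ge_iff_le, hCcard]
  have hS0 : (0:ℝ) ≤ (S.card : ℝ) := by positivity
  have hkey2 : r * (r * V.card / 2) ≤ r * (c * S.card) := mul_le_mul_of_nonneg_left key hr.le
  have hc2 : r * (c * (S.card : ℝ)) = 2 * Δ * S.card := by rw [← mul_assoc, hc]
  rw [div_mul_eq_mul_div, div_le_iff₀ (by positivity : (0:ℝ) < 4 * Δ)]
  nlinarith [hkey2, hc2]
end

section
/- Let α > 0 be a real number and let O_1, …, O_m be pairwise disjoint finite sets and A_1, …, A_m be pairwise disjoint finite sets. Suppose that for every i ∈ {1, …, m}, |A_i| ≥ α·|O_i \ (A_1 ∪ ⋯ ∪ A_{i−1})|. Then (1 + α)·∑_{i=1}^m |A_i| ≥ α·∑_{i=1}^m |O_i|. -/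
/-- Combinatorial core of the single-platform-to-multiple-platforms reduction:
if `O₁, …, Oₘ` are pairwise disjoint, `A₁, …, Aₘ` are pairwise disjoint, and
`|Aᵢ| ≥ α·|Oᵢ \ (A₁ ∪ ⋯ ∪ Aᵢ₋₁)|` for each `i`, then
`(1 + α)·∑ᵢ |Aᵢ| ≥ α·∑ᵢ |Oᵢ|`. -/
theorem stmt_10 {γ : Type*} [DecidableEq γ]
    (a : ℝ) (ha : 0 < a) (m : ℕ)
    (O A : Fin m → Finset γ)
    (hOdisj : ∀ i j : Fin m, i ≠ j → Disjoint (O i) (O j))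
    (hAdisj : ∀ i j : Fin m, i ≠ j → Disjoint (A i) (A j))
    (happrox : ∀ i : Fin m,
      a * ((O i \ (Finset.univ.filter (fun j => j < i)).biUnion A).card : ℝ)
        ≤ ((A i).card : ℝ)) :
    (1 + a) * (∑ i, ((A i).card : ℝ)) ≥ a * (∑ i, ((O i).card : ℝ)) := by
  set U : Finset γ := Finset.univ.biUnion A with hU
  -- key pointwise bound: a*|O i| ≤ |A i| + a*|O i ∩ U|
  have key : ∀ i : Fin m,
      a * ((O i).card : ℝ) ≤ ((A i).card : ℝ) + a * ((O i ∩ U).card : ℝ) := by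
    intro i
    have hsub : (Finset.univ.filter (fun j => j < i)).biUnion A ⊆ U :=
      Finset.biUnion_subset.2 fun j _ => Finset.subset_biUnion_of_mem A (Finset.mem_univ j)
    have hcard : (O i).card ≤
        (O i \ (Finset.univ.filter (fun j => j < i)).biUnion A).card + (O i ∩ U).card := by
      have : O i ⊆ (O i \ (Finset.univ.filter (fun j => j < i)).biUnion A) ∪ (O i ∩ U) := by
        intro x hx
        by_cases hxB : x ∈ (Finset.univ.filter (fun j => j < i)).biUnion A
        · exact Finset.mem_union_right _ (Finset.mem_inter.2 ⟨hx, hsub hxB⟩)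
        · exact Finset.mem_union_left _ (Finset.mem_sdiff.2 ⟨hx, hxB⟩)
      calc (O i).card ≤ _ := Finset.card_le_card this
        _ ≤ _ := Finset.card_union_le _ _
    have hcardR : ((O i).card : ℝ) ≤
        ((O i \ (Finset.univ.filter (fun j => j < i)).biUnion A).card : ℝ) + ((O i ∩ U).card : ℝ) := by
      exact_mod_cast hcard
    nlinarith [happrox i, ha.le]
  have hsum : a * (∑ i, ((O i).card : ℝ)) ≤
      (∑ i, ((A i).card : ℝ)) + a * (∑ i, ((O i ∩ U).card : ℝ)) := by
    rw [Finset.mul_sum, Finset.mul_sum]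
    rw [← Finset.sum_add_distrib]
    exact Finset.sum_le_sum fun i _ => key i
  -- ∑ |O i ∩ U| ≤ |U| ≤ ∑ |A i|
  have h1 : (∑ i, (O i ∩ U).card) ≤ U.card := by
    rw [← Finset.card_biUnion (fun i _ j _ hij =>
      Finset.disjoint_of_subset_left (Finset.inter_subset_left)
        (Finset.disjoint_of_subset_right (Finset.inter_subset_left) (hOdisj i j hij)))]
    exact Finset.card_le_card (Finset.biUnion_subset.2 fun i _ => Finset.inter_subset_right)
  have h2 : U.card ≤ ∑ i, (A i).card := Finset.card_biUnion_le
  have h3 : (∑ i, ((O i ∩ U).card : ℝ)) ≤ ∑ i, ((A i).card : ℝ) := by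
    have := h1.trans h2
    push_cast
    exact_mod_cast this
  nlinarith [hsum, h3, ha.le]
end
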